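/- For a normalized term, quasi-subterms and DAG-subterms coincide: if t = ⌈t⌉ then sub(t) = sub_dag(t). -/
import Mathlib


inductive BinOp : Type
  | enc | aenc | pair | sig
deriving DecidableEq

inductive Term : Type
  | atom : ℕ → Term
  | var  : ℕ → Term
  | bin  : BinOp → Term → Term → Term
  | priv : Term → Term
  | aci  : List Term → Term

def Term.subst (σ : ℕ → Term) : Term → Term
  | .atom a => .atom a
  | .var x => σ x
  | .bin o p q => .bin o (p.subst σ) (q.subst σ)
  | .priv t => .priv (t.subst σ)
  | .aci L => .aci (L.attach.map fun p => p.1.subst σ)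
decreasing_by
  all_goals simp_wf
  all_goals first
    | omega
    | (have := List.sizeOf_lt_of_mem p.2; omega)

def Term.elems : Term → Set Term
  | .aci L => ⋃ p ∈ L.attach, p.1.elems
  | t => {t}
decreasing_by
  have := List.sizeOf_lt_of_mem p.2; simp_wf; omega

def Term.subDag : Term → Set Term
  | .atom a => {.atom a}
  | .var x => {.var x}
  | .bin o p q => insert (.bin o p q) (p.subDag ∪ q.subDag)
  | .priv t => insert (.priv t) t.subDag
  | .aci L => insert (.aci L) (⋃ p ∈ L.attach, p.1.subDag)
decreasing_by
  all_goals simp_wf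
  all_goals first
    | omega
    | (have := List.sizeOf_lt_of_mem p.2; omega)

def Term.vars (t : Term) : Set ℕ := {x | Term.var x ∈ t.subDag}

def Term.Ground (t : Term) : Prop := t.vars = ∅

/-- Specification of the quasi-subterm function `sub`. -/
structure SubSpec where
  sub : Term → Set Term
  sub_atom : ∀ a, sub (.atom a) = {.atom a}
  sub_var : ∀ x, sub (.var x) = {.var x}
  sub_priv : ∀ t, sub (.priv t) = insert (.priv t) (sub t)
  sub_bin : ∀ o p q, sub (.bin o p q) = insert (.bin o p q) (sub p ∪ sub q)
  sub_aci : ∀ L, sub (.aci L) = insert (.aci L) (⋃ p ∈ (Term.aci L).elems, sub p)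

/-- Specification of the ACI normal form with respect to a strict total order `lt`. -/
structure NormSpec (lt : Term → Term → Prop) where
  nf : Term → Term
  nf_atom : ∀ a, nf (.atom a) = .atom a
  nf_var  : ∀ x, nf (.var x) = .var x
  nf_bin  : ∀ o p q, nf (.bin o p q) = .bin o (nf p) (nf q)
  nf_priv : ∀ t, nf (.priv t) = .priv (nf t)
  nf_aci_single : ∀ L t', nf '' (Term.aci L).elems = {t'} → nf (.aci L) = t'
  nf_aci : ∀ L, (¬ ∃ t', nf '' (Term.aci L).elems = {t'}) →
      ∃ L' : List Term, List.Pairwise lt L' ∧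
        (∀ s, s ∈ L' ↔ s ∈ nf '' (Term.aci L).elems) ∧ nf (.aci L) = .aci L'

/-- The derivable closure of a set `E` of terms under a deduction system `R`,
given as a set of rules (premises, conclusion): the least superset of `E`
closed under the rules. -/
inductive Der (R : Set (Set Term × Term)) (E : Set Term) : Term → Prop where
  | base {t : Term} : t ∈ E → Der R E t
  | step {l : Set Term} {r : Term} : (l, r) ∈ R → (∀ s ∈ l, Der R E s) → Der R E r

/-- The composition rules of the DY+ACI deduction system (for normal form `nf`). -/
inductive DYComp (nf : Term → Term) : Set Term → Term → Prop where
  | enc  (t₁ t₂ : Term) : DYComp nf {t₁, t₂} (nf (.bin .enc t₁ t₂))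
  | aenc (t₁ t₂ : Term) : DYComp nf {t₁, t₂} (nf (.bin .aenc t₁ t₂))
  | pair (t₁ t₂ : Term) : DYComp nf {t₁, t₂} (nf (.bin .pair t₁ t₂))
  | sig  (t₁ t₂ : Term) : DYComp nf {t₁, .priv t₂} (nf (.bin .sig t₁ (.priv t₂)))
  | aci  (L : List Term) (h : L ≠ []) : DYComp nf {t | t ∈ L} (nf (.aci L))

/-- The composition rules of DY+ACI other than the ACI-set construction rule. -/
inductive DYCompNoACI (nf : Term → Term) : Set Term → Term → Prop where
  | enc  (t₁ t₂ : Term) : DYCompNoACI nf {t₁, t₂} (nf (.bin .enc t₁ t₂))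
  | aenc (t₁ t₂ : Term) : DYCompNoACI nf {t₁, t₂} (nf (.bin .aenc t₁ t₂))
  | pair (t₁ t₂ : Term) : DYCompNoACI nf {t₁, t₂} (nf (.bin .pair t₁ t₂))
  | sig  (t₁ t₂ : Term) : DYCompNoACI nf {t₁, .priv t₂} (nf (.bin .sig t₁ (.priv t₂)))

/-- The decomposition rules of the DY+ACI deduction system. -/
inductive DYDecomp (nf : Term → Term) : Set Term → Term → Prop where
  | enc  (t₁ t₂ : Term) : DYDecomp nf {.bin .enc t₁ t₂, nf t₂} (nf t₁)
  | aenc (t₁ t₂ : Term) : DYDecomp nf {.bin .aenc t₁ t₂, nf (.priv t₂)} (nf t₁)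
  | fst  (t₁ t₂ : Term) : DYDecomp nf {.bin .pair t₁ t₂} (nf t₁)
  | snd  (t₁ t₂ : Term) : DYDecomp nf {.bin .pair t₁ t₂} (nf t₂)
  | aci  (L : List Term) (t : Term) (h : t ∈ L) : DYDecomp nf {.aci L} (nf t)

/-- The DY+ACI deduction system as a set of rules. -/
def DYACI (nf : Term → Term) : Set (Set Term × Term) :=
  {p | DYComp nf p.1 p.2 ∨ DYDecomp nf p.1 p.2}

/-- A ground substitution `σ` is a model of a constraint system
`S = {Eᵢ ▷ tᵢ}` if `⌈tᵢσ⌉` is derivable from `⌈Eᵢσ⌉` in DY+ACI. -/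
def Models (nf : Term → Term) (σ : ℕ → Term) (S : List (Set Term × Term)) : Prop :=
  ∀ c ∈ S, Der (DYACI nf) (nf '' ((fun t => t.subst σ) '' c.1)) (nf (c.2.subst σ))

/-- All terms occurring in a constraint system. -/
def termsOf (S : List (Set Term × Term)) : Set Term :=
  ⋃ c ∈ S, c.1 ∪ {c.2}

/-- DAG-subterms of a constraint system. -/
def subDagS (S : List (Set Term × Term)) : Set Term :=
  ⋃ t ∈ termsOf S, t.subDag

/-- Variables of a constraint system. -/
def varsS (S : List (Set Term × Term)) : Set ℕ :=
  {x | Term.var x ∈ subDagS S}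

/-- Applying a substitution to a constraint system. -/
def substS (θ : ℕ → Term) (S : List (Set Term × Term)) : List (Set Term × Term) :=
  S.map fun c => ((fun t => t.subst θ) '' c.1, c.2.subst θ)

/-- The domain of a substitution. -/
def dom (θ : ℕ → Term) : Set ℕ := {x | θ x ≠ .var x}


section AuxSub

lemma elems_aci_eq (L : List Term) : (Term.aci L).elems = ⋃ p ∈ L, Term.elems p := by
  rw [Term.elems]
  ext s
  simp

lemma elems_not_aci (t : Term) (h : ∀ L, t ≠ Term.aci L) : t.elems = {t} := by
  cases t with
  | aci L => exact absurd rfl (h L)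
  | atom a => rw [Term.elems]; intro _ h'; cases h'
  | var x => rw [Term.elems]; intro _ h'; cases h'
  | bin o p q => rw [Term.elems]; intro _ h'; cases h'
  | priv s => rw [Term.elems]; intro _ h'; cases h'

lemma mem_elems_not_aci : ∀ (n : ℕ) (t : Term), sizeOf t < n →
    ∀ s ∈ t.elems, ∀ L, s ≠ Term.aci L := by
  intro n
  induction n with
  | zero => omega
  | succ n ih =>
    intro t ht s hs
    cases t with
    | aci L =>
      rw [elems_aci_eq] at hs
      simp only [Set.mem_iUnion] at hs
      obtain ⟨p, hp, hsp⟩ := hs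
      have hsz : sizeOf p < sizeOf (Term.aci L) := by
        have := List.sizeOf_lt_of_mem hp; simp only [Term.aci.sizeOf_spec]; omega
      exact ih p (by omega) s hsp
    | atom a => rw [elems_not_aci _ (by intro _ h; cases h)] at hs; subst hs; intro _ h; cases h
    | var x => rw [elems_not_aci _ (by intro _ h; cases h)] at hs; subst hs; intro _ h; cases h
    | bin o p q => rw [elems_not_aci _ (by intro _ h; cases h)] at hs; subst hs; intro _ h; cases h
    | priv u => rw [elems_not_aci _ (by intro _ h; cases h)] at hs; subst hs; intro _ h; cases h

lemma sizeOf_le_of_mem_elems : ∀ (n : ℕ) (t : Term), sizeOf t < n →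
    ∀ s ∈ t.elems, sizeOf s ≤ sizeOf t := by
  intro n
  induction n with
  | zero => omega
  | succ n ih =>
    intro t ht s hs
    cases t with
    | aci L =>
      rw [elems_aci_eq] at hs
      simp only [Set.mem_iUnion] at hs
      obtain ⟨p, hp, hsp⟩ := hs
      have hsz : sizeOf p < sizeOf (Term.aci L) := by
        have := List.sizeOf_lt_of_mem hp; simp only [Term.aci.sizeOf_spec]; omega
      have := ih p (by omega) s hsp
      omega
    | atom a => rw [elems_not_aci _ (by intro _ h; cases h)] at hs; subst hs; omega
    | var x => rw [elems_not_aci _ (by intro _ h; cases h)] at hs; subst hs; omega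
    | bin o p q => rw [elems_not_aci _ (by intro _ h; cases h)] at hs; subst hs; omega
    | priv u => rw [elems_not_aci _ (by intro _ h; cases h)] at hs; subst hs; omega

lemma sizeOf_lt_of_mem_elems_aci {L : List Term} {s : Term}
    (hs : s ∈ (Term.aci L).elems) : sizeOf s < sizeOf (Term.aci L) := by
  rw [elems_aci_eq] at hs
  simp only [Set.mem_iUnion] at hs
  obtain ⟨p, hp, hsp⟩ := hs
  have h1 := sizeOf_le_of_mem_elems (sizeOf p + 1) p (by omega) s hsp
  have h2 := List.sizeOf_lt_of_mem hp
  simp only [Term.aci.sizeOf_spec]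
  omega

lemma nf_not_aci {lt : Term → Term → Prop} (N : NormSpec lt) (t : Term)
    (h : ∀ L, t ≠ Term.aci L) : ∀ L, N.nf t ≠ Term.aci L := by
  cases t with
  | aci L => exact absurd rfl (h L)
  | atom a => rw [N.nf_atom]; intro _ h'; cases h'
  | var x => rw [N.nf_var]; intro _ h'; cases h'
  | bin o p q => rw [N.nf_bin]; intro _ h'; cases h'
  | priv s => rw [N.nf_priv]; intro _ h'; cases h'

lemma pairwise_eq_of_mem_iff {lt : Term → Term → Prop} (hlt : IsStrictTotalOrder Term lt) :
    ∀ (L₁ L₂ : List Term), L₁.Pairwise lt → L₂.Pairwise lt →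
      (∀ s, s ∈ L₁ ↔ s ∈ L₂) → L₁ = L₂ := by
  haveI := hlt
  intro L₁
  induction L₁ with
  | nil =>
    intro L₂ _ _ h
    cases L₂ with
    | nil => rfl
    | cons b T => exact absurd ((h b).2 (by simp)) (by simp)
  | cons a T ih =>
    intro L₂ h₁ h₂ h
    cases L₂ with
    | nil => exact absurd ((h a).1 (by simp)) (by simp)
    | cons b T₂ =>
      have hab : a = b := by
        by_contra hne
        have ha : a = b ∨ a ∈ T₂ := by
          have := (h a).1 (by simp)
          simpa using this
        have hb : b = a ∨ b ∈ T := by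
          have := (h b).2 (by simp)
          simpa using this
        have hba : lt b a := by
          rcases ha with h' | h'
          · exact absurd h' hne
          · exact (List.pairwise_cons.1 h₂).1 a h'
        have hab' : lt a b := by
          rcases hb with h' | h'
          · exact absurd h'.symm hne
          · exact (List.pairwise_cons.1 h₁).1 b h'
        exact irrefl_of lt a (trans_of lt hab' hba)
      subst hab
      have hT : ∀ s, s ∈ T ↔ s ∈ T₂ := by
        intro s
        constructor
        · intro hs
          have := (h s).1 (List.mem_cons_of_mem a hs)
          rcases List.mem_cons.1 this with rfl | h'
          · exact absurd ((List.pairwise_cons.1 h₁).1 s hs) (irrefl_of lt s)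
          · exact h'
        · intro hs
          have := (h s).2 (List.mem_cons_of_mem a hs)
          rcases List.mem_cons.1 this with rfl | h'
          · exact absurd ((List.pairwise_cons.1 h₂).1 s hs) (irrefl_of lt s)
          · exact h'
      rw [ih T₂ (List.pairwise_cons.1 h₁).2 (List.pairwise_cons.1 h₂).2 hT]

lemma nf_idem {lt : Term → Term → Prop} (hlt : IsStrictTotalOrder Term lt)
    (N : NormSpec lt) : ∀ (n : ℕ) (t : Term), sizeOf t < n → N.nf (N.nf t) = N.nf t := by
  intro n
  induction n with
  | zero => omega
  | succ n ih =>
    intro t ht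
    cases t with
    | atom a => rw [N.nf_atom, N.nf_atom]
    | var x => rw [N.nf_var, N.nf_var]
    | bin o p q =>
      have hs : sizeOf p < sizeOf (Term.bin o p q) ∧ sizeOf q < sizeOf (Term.bin o p q) := by
        simp only [Term.bin.sizeOf_spec]; omega
      rw [N.nf_bin, N.nf_bin, ih p (by omega), ih q (by omega)]
    | priv u =>
      have hs : sizeOf u < sizeOf (Term.priv u) := by
        simp only [Term.priv.sizeOf_spec]; omega
      rw [N.nf_priv, N.nf_priv, ih u (by omega)]
    | aci L =>
      by_cases hsing : ∃ t', N.nf '' (Term.aci L).elems = {t'}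
      · obtain ⟨t', ht'⟩ := hsing
        rw [N.nf_aci_single L t' ht']
        have : t' ∈ N.nf '' (Term.aci L).elems := by rw [ht']; rfl
        obtain ⟨p, hp, rfl⟩ := this
        have := sizeOf_lt_of_mem_elems_aci hp
        exact ih p (by omega)
      · obtain ⟨L', hpw, hmem, heq⟩ := N.nf_aci L hsing
        rw [heq]
        -- every member of L' is a non-aci fixed point of nf
        have hfix : ∀ s ∈ L', N.nf s = s ∧ ∀ M, s ≠ Term.aci M := by
          intro s hs
          obtain ⟨p, hp, rfl⟩ := (hmem s).1 hs
          have hpna : ∀ M, p ≠ Term.aci M :=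
            mem_elems_not_aci (sizeOf (Term.aci L) + 1) (Term.aci L) (by omega) p hp
          have hsz := sizeOf_lt_of_mem_elems_aci hp
          exact ⟨ih p (by omega), nf_not_aci N p hpna⟩
        have helems : (Term.aci L').elems = {s | s ∈ L'} := by
          rw [elems_aci_eq]
          ext s
          simp only [Set.mem_iUnion, Set.mem_setOf_eq]
          constructor
          · rintro ⟨p, hp, hsp⟩
            rw [elems_not_aci p (hfix p hp).2] at hsp
            subst hsp; exact hp
          · intro hs
            exact ⟨s, hs, by rw [elems_not_aci s (hfix s hs).2]; rfl⟩
        have himg : N.nf '' (Term.aci L').elems = {s | s ∈ L'} := by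
          rw [helems]
          ext s
          simp only [Set.mem_image, Set.mem_setOf_eq]
          constructor
          · rintro ⟨p, hp, rfl⟩
            rw [(hfix p hp).1]; exact hp
          · intro hs
            exact ⟨s, hs, (hfix s hs).1⟩
        have hset : {s | s ∈ L'} = N.nf '' (Term.aci L).elems := by
          ext s; simpa using hmem s
        have hns : ¬ ∃ t', N.nf '' (Term.aci L').elems = {t'} := by
          rw [himg, hset]; exact hsing
        obtain ⟨L'', hpw'', hmem'', heq''⟩ := N.nf_aci L' hns
        rw [heq'']
        congr 1
        refine pairwise_eq_of_mem_iff hlt L'' L' hpw'' hpw ?_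
        intro s
        rw [hmem'' s, himg, Set.mem_setOf_eq]
      
lemma nf_idem' {lt : Term → Term → Prop} (hlt : IsStrictTotalOrder Term lt)
    (N : NormSpec lt) (t : Term) : N.nf (N.nf t) = N.nf t :=
  nf_idem hlt N (sizeOf t + 1) t (by omega)

end AuxSub

/-- For a normalized term, quasi-subterms and DAG-subterms coincide. -/
theorem sub_eq_subDag_of_normalized (lt : Term → Term → Prop)
    (hlt : IsStrictTotalOrder Term lt) (N : NormSpec lt) (Sp : SubSpec) :
    ∀ t : Term, t = N.nf t → Sp.sub t = t.subDag := by
  intro t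
  -- strong induction on sizeOf t
  suffices h : ∀ (n : ℕ) (t : Term), sizeOf t < n → t = N.nf t → Sp.sub t = t.subDag by
    exact h (sizeOf t + 1) t (by omega)
  clear t
  intro n
  induction n with
  | zero => omega
  | succ n ih =>
    intro t ht hnf
    cases t with
    | atom a => rw [Sp.sub_atom, Term.subDag]
    | var x => rw [Sp.sub_var, Term.subDag]
    | bin o p q =>
      rw [N.nf_bin] at hnf
      injection hnf with _ hp hq
      have hs : sizeOf p < sizeOf (Term.bin o p q) ∧ sizeOf q < sizeOf (Term.bin o p q) := by
        simp only [Term.bin.sizeOf_spec]; omega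
      rw [Sp.sub_bin, Term.subDag, ih p (by omega) hp, ih q (by omega) hq]
    | priv u =>
      rw [N.nf_priv] at hnf
      injection hnf with hu
      have hs : sizeOf u < sizeOf (Term.priv u) := by
        simp only [Term.priv.sizeOf_spec]; omega
      rw [Sp.sub_priv, Term.subDag, ih u (by omega) hu]
    | aci L =>
      by_cases hsing : ∃ t', N.nf '' (Term.aci L).elems = {t'}
      · exfalso
        obtain ⟨t', ht'⟩ := hsing
        have h1 : N.nf (Term.aci L) = t' := N.nf_aci_single L t' ht'
        have : t' ∈ N.nf '' (Term.aci L).elems := by rw [ht']; rfl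
        obtain ⟨p, hp, rfl⟩ := this
        have hpna : ∀ M, p ≠ Term.aci M :=
          mem_elems_not_aci (sizeOf (Term.aci L) + 1) (Term.aci L) (by omega) p hp
        exact nf_not_aci N p hpna L (by rw [← h1, ← hnf])
      · obtain ⟨L', hpw, hmem, heq⟩ := N.nf_aci L hsing
        rw [heq] at hnf
        injection hnf with hLL
        subst hLL
        -- every member of L is a non-aci normalized term
        have hfix : ∀ s ∈ L, s = N.nf s ∧ ∀ M, s ≠ Term.aci M := by
          intro s hs
          obtain ⟨p, hp, rfl⟩ := (hmem s).1 hs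
          have hpna : ∀ M, p ≠ Term.aci M :=
            mem_elems_not_aci (sizeOf (Term.aci L) + 1) (Term.aci L) (by omega) p hp
          exact ⟨(nf_idem' hlt N p).symm, nf_not_aci N p hpna⟩
        have helems : (Term.aci L).elems = {s | s ∈ L} := by
          rw [elems_aci_eq]
          ext s
          simp only [Set.mem_iUnion, Set.mem_setOf_eq]
          constructor
          · rintro ⟨p, hp, hsp⟩
            rw [elems_not_aci p (hfix p hp).2] at hsp
            subst hsp; exact hp
          · intro hs
            exact ⟨s, hs, by rw [elems_not_aci s (hfix s hs).2]; rfl⟩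
        rw [Sp.sub_aci, Term.subDag, helems]
        congr 1
        ext s
        simp only [Set.mem_iUnion, Set.mem_setOf_eq, List.mem_attach, true_and,
          Subtype.exists, exists_prop]
        constructor
        · rintro ⟨p, hp, hsp⟩
          have hsz := List.sizeOf_lt_of_mem hp
          have : sizeOf p < sizeOf (Term.aci L) := by
            simp only [Term.aci.sizeOf_spec]; omega
          rw [ih p (by omega) (hfix p hp).1] at hsp
          exact ⟨p, hp, hsp⟩
        · rintro ⟨p, hp, hsp⟩
          have hsz := List.sizeOf_lt_of_mem hp
          have : sizeOf p < sizeOf (Term.aci L) := by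
            simp only [Term.aci.sizeOf_spec]; omega
          rw [← ih p (by omega) (hfix p hp).1] at hsp
          exact ⟨p, hp, hsp⟩
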